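/- arXiv:1106.2305 — 2 statements merged into one kernel-verified Lean document; each statement's English description precedes it below -/
import Mathlib

section
/- Let R be an RBox and let I be a model of R. For every set Y of SHI concepts, every role R, and all elements x, y of the domain of I: if (x,y) ∈ R^I and y ∈ Y^I, then x ∈ (Trans_R(Y,R⁻))^I. -/
namespace SHI

/-! Syntax and semantics of the description logic SHI. -/

/-- A role is a role name or the inverse of a role name. -/
inductive Role (RN : Type) : Type
  | nm : RN → Role RN
  | inv : RN → Role RN

/-- The inverse (converse) of a role, with `(r⁻)⁻ = r`. -/
def Role.conv {RN : Type} : Role RN → Role RN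
  | .nm r => .inv r
  | .inv r => .nm r

/-- SHI concepts over concept names `CN` and role names `RN`. -/
inductive Concept (CN RN : Type) : Type
  | top : Concept CN RN
  | bot : Concept CN RN
  | atom : CN → Concept CN RN
  | neg : Concept CN RN → Concept CN RN
  | inter : Concept CN RN → Concept CN RN → Concept CN RN
  | union : Concept CN RN → Concept CN RN → Concept CN RN
  | all : Role RN → Concept CN RN → Concept CN RN
  | ex : Role RN → Concept CN RN → Concept CN RN

/-- An interpretation with nonempty domain. -/
structure Interp (CN RN IN : Type) : Type 1 where
  Dom : Type
  dom_nonempty : Nonempty Dom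
  atomI : CN → Set Dom
  roleI : RN → Dom → Dom → Prop
  indI : IN → Dom

/-- Interpretation of roles: `(r⁻)^I = (r^I)⁻¹`. -/
def Interp.rI {CN RN IN : Type} (I : Interp CN RN IN) : Role RN → I.Dom → I.Dom → Prop
  | .nm r => I.roleI r
  | .inv r => fun x y => I.roleI r y x

/-- Interpretation of concepts. -/
def Interp.cI {CN RN IN : Type} (I : Interp CN RN IN) : Concept CN RN → Set I.Dom
  | .top => Set.univ
  | .bot => ∅
  | .atom A => I.atomI A
  | .neg C => (I.cI C)ᶜ
  | .inter C D => I.cI C ∩ I.cI D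
  | .union C D => I.cI C ∪ I.cI D
  | .all R C => {x | ∀ y, I.rI R x y → y ∈ I.cI C}
  | .ex R C => {x | ∃ y, I.rI R x y ∧ y ∈ I.cI C}

/-- Interpretation of a set of concepts: `X^I = {x | x ∈ C^I for all C ∈ X}`. -/
def Interp.sI {CN RN IN : Type} (I : Interp CN RN IN) (X : Set (Concept CN RN)) : Set I.Dom :=
  {x | ∀ C ∈ X, x ∈ I.cI C}

/-- Role axioms: `R ⊑ S` or `R ∘ R ⊑ R`. -/
inductive RoleAxiom (RN : Type) : Type
  | sub : Role RN → Role RN → RoleAxiom RN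
  | tra : Role RN → RoleAxiom RN

/-- Membership in `Ext(R)`, the least extension of an RBox `RB` with the closure rules. -/
inductive ExtMem {RN : Type} (RB : Set (RoleAxiom RN)) : RoleAxiom RN → Prop
  | base {ax : RoleAxiom RN} : ax ∈ RB → ExtMem RB ax
  | refl (S : Role RN) : ExtMem RB (.sub S S)
  | inv_sub {S T : Role RN} : ExtMem RB (.sub S T) → ExtMem RB (.sub S.conv T.conv)
  | inv_tra {S : Role RN} : ExtMem RB (.tra S) → ExtMem RB (.tra S.conv)
  | sub_tra {S T U : Role RN} :
      ExtMem RB (.sub S T) → ExtMem RB (.sub T U) → ExtMem RB (.sub S U)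

/-- `R ⊑_RB S`, i.e. `R ⊑ S ∈ Ext(RB)`. -/
def SubRole {RN : Type} (RB : Set (RoleAxiom RN)) (S T : Role RN) : Prop :=
  ExtMem RB (.sub S T)

/-- An interpretation satisfies a role axiom. -/
def Interp.modelsAxiom {CN RN IN : Type} (I : Interp CN RN IN) : RoleAxiom RN → Prop
  | .sub S T => ∀ x y, I.rI S x y → I.rI T x y
  | .tra S => ∀ x y z, I.rI S x y → I.rI S y z → I.rI S x z

/-- An interpretation is a model of an RBox. -/
def Interp.modelsRBox {CN RN IN : Type} (I : Interp CN RN IN) (RB : Set (RoleAxiom RN)) : Prop :=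
  ∀ ax ∈ RB, I.modelsAxiom ax

/-- A model of a TBox, whose concepts are treated as global assumptions. -/
def Interp.modelsTBox {CN RN IN : Type} (I : Interp CN RN IN) (TB : Set (Concept CN RN)) : Prop :=
  ∀ C ∈ TB, I.cI C = Set.univ

/-- `Trans_RB(X, R)` for a set `X` of concepts. -/
def transferC {CN RN : Type} (RB : Set (RoleAxiom RN)) (X : Set (Concept CN RN)) (R : Role RN) :
    Set (Concept CN RN) :=
  {D | Concept.all R D ∈ X} ∪
    {C | ∃ S D, C = Concept.all S D ∧ Concept.all S D ∈ X ∧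
      SubRole RB R S ∧ ExtMem RB (.tra S)}

/-- Satisfiability of a set of concepts w.r.t. an RBox and a TBox. -/
def SatWrt (CN RN IN : Type) (RB : Set (RoleAxiom RN)) (TB : Set (Concept CN RN))
    (X : Set (Concept CN RN)) : Prop :=
  ∃ I : Interp CN RN IN, I.modelsRBox RB ∧ I.modelsTBox TB ∧ (I.sI X).Nonempty

/-- ABox assertions: `a:C` or `R(a,b)`. -/
inductive Assertion (CN RN IN : Type) : Type
  | conc : IN → Concept CN RN → Assertion CN RN IN
  | rel : Role RN → IN → IN → Assertion CN RN IN

def Interp.modelsAssertion {CN RN IN : Type} (I : Interp CN RN IN) : Assertion CN RN IN → Prop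
  | .conc a C => I.indI a ∈ I.cI C
  | .rel R a b => I.rI R (I.indI a) (I.indI b)

/-- An interpretation is a model of an ABox. -/
def Interp.modelsABox {CN RN IN : Type} (I : Interp CN RN IN)
    (AB : Set (Assertion CN RN IN)) : Prop :=
  ∀ φ ∈ AB, I.modelsAssertion φ

/-- Satisfiability of a knowledge base `(RB, TB, AB)`. -/
def KBSat (CN RN IN : Type) (RB : Set (RoleAxiom RN)) (TB : Set (Concept CN RN))
    (AB : Set (Assertion CN RN IN)) : Prop :=
  ∃ I : Interp CN RN IN, I.modelsRBox RB ∧ I.modelsTBox TB ∧ I.modelsABox AB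

/-- `Trans_RB(Y, a, R, b)` for a set `Y` of ABox assertions. -/
def transferAB {CN RN IN : Type} (RB : Set (RoleAxiom RN)) (Y : Set (Assertion CN RN IN))
    (a : IN) (R : Role RN) (b : IN) : Set (Assertion CN RN IN) :=
  {φ | ∃ D, φ = Assertion.conc b D ∧ Assertion.conc a (Concept.all R D) ∈ Y} ∪
    {φ | ∃ S D, φ = Assertion.conc b (Concept.all S D) ∧
      Assertion.conc a (Concept.all S D) ∈ Y ∧ SubRole RB R S ∧ ExtMem RB (.tra S)}

/-- `Trans_RB(Y, a, R)` (a set of concepts) for a set `Y` of ABox assertions. -/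
def transferAC {CN RN IN : Type} (RB : Set (RoleAxiom RN)) (Y : Set (Assertion CN RN IN))
    (a : IN) (R : Role RN) : Set (Concept CN RN) :=
  {D | Assertion.conc a (Concept.all R D) ∈ Y} ∪
    {C | ∃ S D, C = Concept.all S D ∧ Assertion.conc a (Concept.all S D) ∈ Y ∧
      SubRole RB R S ∧ ExtMem RB (.tra S)}

/-- A family `E'` of relations extends `E`, respects converses, the role hierarchy of `RB`,
and transitivity axioms of `Ext(RB)`. -/
def ClosedFam {RN Δ : Type} (RB : Set (RoleAxiom RN)) (E E' : Role RN → Δ → Δ → Prop) : Prop :=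
  (∀ R x y, E R x y → E' R x y) ∧
  (∀ R x y, E' R.conv x y ↔ E' R y x) ∧
  (∀ R S, SubRole RB R S → ∀ x y, E' R x y → E' S x y) ∧
  (∀ R, ExtMem RB (.tra R) → ∀ x y z, E' R x y → E' R y z → E' R x z)

/-- An `RB`-saturated model graph `(Δ, Cmap, E)`. -/
def Saturated {CN RN Δ : Type} (RB : Set (RoleAxiom RN)) (Cmap : Δ → Set (Concept CN RN))
    (E : Role RN → Δ → Δ → Prop) : Prop :=
  ∀ x : Δ,
    (∀ C D : Concept CN RN, Concept.inter C D ∈ Cmap x → C ∈ Cmap x ∧ D ∈ Cmap x) ∧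
    (∀ C D : Concept CN RN, Concept.union C D ∈ Cmap x → C ∈ Cmap x ∨ D ∈ Cmap x) ∧
    (∀ (R S : Role RN) (C : Concept CN RN),
      Concept.all S C ∈ Cmap x → SubRole RB R S → Concept.all R C ∈ Cmap x) ∧
    (∀ (R : Role RN) (y : Δ), E R x y → transferC RB (Cmap x) R ⊆ Cmap y) ∧
    (∀ (R : Role RN) (y : Δ), E R x y → transferC RB (Cmap y) R.conv ⊆ Cmap x) ∧
    (∀ (R : Role RN) (C : Concept CN RN),
      Concept.ex R C ∈ Cmap x → ∃ y : Δ, E R x y ∧ C ∈ Cmap y)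

/-- A consistent model graph: no label contains `⊥` or a pair `A, ¬A`. -/
def ConsistentMG {CN RN Δ : Type} (Cmap : Δ → Set (Concept CN RN)) : Prop :=
  ∀ x : Δ, Concept.bot ∉ Cmap x ∧
    ∀ A : CN, ¬ (Concept.atom A ∈ Cmap x ∧ Concept.neg (Concept.atom A) ∈ Cmap x)

/-- The interpretation corresponding to a model graph, built from a family `E'` of relations:
the domain is `Δ`, `a^I = a` (via `ind`), `A^I = {x | A ∈ Cmap x}` and `r^I = E'(r)`. -/
def mgInterp (CN RN IN Δ : Type) [Nonempty Δ] (ind : IN → Δ)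
    (Cmap : Δ → Set (Concept CN RN)) (E' : Role RN → Δ → Δ → Prop) : Interp CN RN IN :=
  ⟨Δ, ‹Nonempty Δ›, fun A => {z | Concept.atom A ∈ Cmap z}, fun r => E' (.nm r), ind⟩

/-- A concept is in negation normal form: negation occurs only directly before concept names. -/
def Concept.isNNF {CN RN : Type} : Concept CN RN → Prop
  | .neg (.atom _) => True
  | .neg _ => False
  | .inter C D => C.isNNF ∧ D.isNNF
  | .union C D => C.isNNF ∧ D.isNNF
  | .all _ C => C.isNNF
  | .ex _ C => C.isNNF
  | _ => True



lemma rI_conv {CN RN IN : Type} (I : Interp CN RN IN) (R : Role RN) (x y : I.Dom) :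
    I.rI R.conv x y ↔ I.rI R y x := by
  cases R <;> simp [Role.conv, Interp.rI]

lemma models_ext {CN RN IN : Type} (RB : Set (RoleAxiom RN)) (I : Interp CN RN IN)
    (hI : I.modelsRBox RB) {ax : RoleAxiom RN} (h : ExtMem RB ax) : I.modelsAxiom ax := by
  induction h with
  | base h => exact hI _ h
  | refl S => exact fun x y h => h
  | inv_sub _ ih => exact fun x y h =>
      (rI_conv I _ x y).mpr (ih _ _ ((rI_conv I _ x y).mp h))
  | inv_tra _ ih => exact fun x y z h1 h2 =>
      (rI_conv I _ x z).mpr (ih _ _ _ ((rI_conv I _ y z).mp h2) ((rI_conv I _ x y).mp h1))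
  | sub_tra _ _ ih1 ih2 => exact fun x y h => ih2 x y (ih1 x y h)

/-- if `(x,y) ∈ R^I` and `y ∈ Y^I` then `x ∈ (Trans_RB(Y,R⁻))^I`. -/
theorem transfer_backward (CN RN IN : Type) (RB : Set (RoleAxiom RN)) (hRB : RB.Finite)
    (I : Interp CN RN IN) (hI : I.modelsRBox RB)
    (Y : Set (Concept CN RN)) (R : Role RN) (x y : I.Dom)
    (hxy : I.rI R x y) (hy : y ∈ I.sI Y) :
    x ∈ I.sI (transferC RB Y R.conv) := by
  intro C hC
  rcases hC with hC | ⟨S, D, rfl, hSD, hsub, htra⟩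
  · exact hy _ hC x ((rI_conv I R y x).mpr hxy)
  · intro z hxz
    have hyx : I.rI S y x :=
      models_ext RB I hI hsub y x ((rI_conv I R y x).mpr hxy)
    exact hy _ hSD z (models_ext RB I hI htra y x z hyx hxz)

end SHI
end

section
/- Soundness and invertibility of the role-assertion transfer rule: for every RBox R, TBox T, ABox A, individuals a, b and role R, the knowledge base (R, T, A ∪ {R(a,b)}) is satisfiable if and only if the knowledge base (R, T, A ∪ {R(a,b)} ∪ Trans_R(A,a,R,b) ∪ Trans_R(A,b,R⁻,a)) is satisfiable. -/
namespace SHI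

lemma ext_sound {CN RN IN : Type} {I : Interp CN RN IN} {RB : Set (RoleAxiom RN)}
    (hM : I.modelsRBox RB) {ax : RoleAxiom RN} (h : ExtMem RB ax) : I.modelsAxiom ax := by
  induction h with
  | base h => exact hM _ h
  | refl S => exact fun x y h => h
  | inv_sub _ ih =>
      intro x y h
      exact (rI_conv I _ x y).mpr (ih y x ((rI_conv I _ x y).mp h))
  | inv_tra _ ih =>
      intro x y z hxy hyz
      exact (rI_conv I _ x z).mpr (ih z y x ((rI_conv I _ y z).mp hyz) ((rI_conv I _ x y).mp hxy))
  | sub_tra _ _ ih1 ih2 => exact fun x y h => ih2 x y (ih1 x y h)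

/-- soundness and invertibility of the role-assertion transfer rule. -/
theorem abox_role_rule (CN RN IN : Type) (RB : Set (RoleAxiom RN)) (hRB : RB.Finite)
    (TB : Set (Concept CN RN)) (hTB : TB.Finite)
    (AB : Set (Assertion CN RN IN)) (hAB : AB.Finite)
    (a b : IN) (R : Role RN) :
    KBSat CN RN IN RB TB (AB ∪ {Assertion.rel R a b}) ↔
      KBSat CN RN IN RB TB (AB ∪ {Assertion.rel R a b} ∪
        transferAB RB AB a R b ∪ transferAB RB AB b R.conv a) := by
  constructor
  · rintro ⟨I, hR, hT, hA⟩
    refine ⟨I, hR, hT, ?_⟩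
    have hab : I.rI R (I.indI a) (I.indI b) :=
      hA (Assertion.rel R a b) (by simp)
    have hAB : ∀ φ ∈ AB, I.modelsAssertion φ := fun φ hφ => hA φ (Or.inl hφ)
    have key : ∀ (a b : IN) (R : Role RN), I.rI R (I.indI a) (I.indI b) →
        ∀ φ ∈ transferAB RB AB a R b, I.modelsAssertion φ := by
      rintro a b R hab φ (⟨D, rfl, hD⟩ | ⟨S, D, rfl, hSD, hsub, htra⟩)
      · exact hAB _ hD _ hab
      · intro y hy
        have haS : I.rI S (I.indI a) (I.indI b) := ext_sound hR hsub _ _ hab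
        have hay : I.rI S (I.indI a) y := ext_sound hR htra _ _ _ haS hy
        exact hAB _ hSD _ hay
    rintro φ (((hφ | hφ) | hφ) | hφ)
    · exact hAB _ hφ
    · cases hφ; exact hab
    · exact key a b R hab _ hφ
    · exact key b a R.conv ((rI_conv I R _ _).mpr hab) _ hφ
  · rintro ⟨I, hR, hT, hA⟩
    exact ⟨I, hR, hT, fun φ hφ => hA φ (Or.inl (Or.inl hφ))⟩

end SHI
end
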